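/- arXiv:2504.14418 — 5 statements merged into one kernel-verified Lean document; each statement's English description precedes it below -/
import Mathlib

section
/- For every positive integer n, the n-th harmonic number H_n = sum_{k=1}^n 1/k satisfies 1/(2n+1) ≤ H_n − ln(n) − γ ≤ 1/(2n), where γ is the Euler–Mascheroni constant. -/
open Real Filter

lemma aux_log_lb {x : ℝ} (hx : 0 < x) : 2 / (2 * x + 1) ≤ Real.log (1 + x⁻¹) := by
  have h := Real.hasSum_log_one_add_inv hx
  have h0 : (2:ℝ) * (1 / (2 * (0:ℕ) + 1)) * (1 / (2 * x + 1)) ^ (2 * (0:ℕ) + 1)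
      = 2 / (2 * x + 1) := by norm_num; ring
  calc 2 / (2 * x + 1) = _ := h0.symm
    _ ≤ _ := le_hasSum h 0 (fun k _ => by positivity)

lemma aux_log_ub {x : ℝ} (hx : 0 < x) :
    Real.log (1 + x⁻¹) ≤ (2 * x + 1) / (2 * x * (x + 1)) := by
  set s : ℝ := 1 / (2 * x + 1) with hs
  have hx1 : (0:ℝ) < 2 * x + 1 := by linarith
  have hs0 : 0 < s := by positivity
  have hs1 : s < 1 := by
    rw [hs, div_lt_one hx1]; linarith
  have hr : s ^ 2 < 1 := by nlinarith
  have h1 : (1:ℝ) - s ^ 2 ≠ 0 := by nlinarith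
  have hg := (hasSum_geometric_of_lt_one (by positivity) hr).mul_left (2 * s)
  have h := Real.hasSum_log_one_add_inv hx
  have hle := hasSum_le (fun k => ?_) h hg
  · calc Real.log (1 + x⁻¹) ≤ 2 * s * (1 - s ^ 2)⁻¹ := hle
      _ = (2 * x + 1) / (2 * x * (x + 1)) := by
        have key : 2 * s = (2 * x + 1) / (2 * x * (x + 1)) * (1 - s ^ 2) := by
          rw [hs]; field_simp; ring
        rw [key, mul_inv_cancel_right₀ h1]
  · have hpow : s ^ (2 * k + 1) = s * (s ^ 2) ^ k := by ring
    rw [hpow]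
    have hk : (1:ℝ) / (2 * (k:ℝ) + 1) ≤ 1 := by
      rw [div_le_one (by positivity)]
      norm_num
    have hp : (0:ℝ) ≤ s * (s^2)^k := by positivity
    nlinarith [hp, hk]

noncomputable def useq (n : ℕ) : ℝ := harmonic n - Real.log n - 1 / (2 * n)
noncomputable def vseq (n : ℕ) : ℝ := harmonic n - Real.log n - 1 / (2 * n + 1)

lemma log_split (n : ℕ) (hn : 1 ≤ n) :
    Real.log ((n:ℝ) + 1) = Real.log n + Real.log (1 + (n:ℝ)⁻¹) := by
  have hx0 : (0:ℝ) < n := by exact_mod_cast hn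
  rw [← Real.log_mul (by positivity) (by positivity)]
  congr 1
  field_simp

lemma useq_step (n : ℕ) (hn : 1 ≤ n) : useq n ≤ useq (n + 1) := by
  have hx : (1:ℝ) ≤ n := by exact_mod_cast hn
  have hx0 : (0:ℝ) < n := by linarith
  have hlog := aux_log_ub hx0
  simp only [useq, harmonic_succ]
  push_cast
  rw [log_split n hn]
  have e : (2 * (n:ℝ) + 1) / (2 * n * (n + 1))
      = ((n:ℝ) + 1)⁻¹ + 1 / (2 * n) - 1 / (2 * (n + 1)) := by
    field_simp
    ring
  rw [e] at hlog
  linarith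

lemma vseq_step (n : ℕ) (hn : 1 ≤ n) : vseq (n + 1) ≤ vseq n := by
  have hx : (1:ℝ) ≤ n := by exact_mod_cast hn
  have hx0 : (0:ℝ) < n := by linarith
  have hlog := aux_log_lb hx0
  simp only [vseq, harmonic_succ]
  push_cast
  rw [log_split n hn]
  have e : 2 / (2 * (n:ℝ) + 1) - (((n:ℝ) + 1)⁻¹ + 1 / (2 * n + 1) - 1 / (2 * (n + 1) + 1))
      = 1 / ((2 * n + 1) * (n + 1) * (2 * n + 3)) := by
    field_simp
    ring
  have hp : (0:ℝ) < 1 / ((2 * (n:ℝ) + 1) * (n + 1) * (2 * n + 3)) := by positivity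
  linarith

lemma useq_tendsto : Filter.Tendsto useq atTop (nhds Real.eulerMascheroniConstant) := by
  have h1 : Filter.Tendsto (fun n : ℕ => 1 / (2 * (n:ℝ))) atTop (nhds 0) := by
    simp only [one_div]
    exact (tendsto_inv_atTop_zero).comp
      ((tendsto_natCast_atTop_atTop).const_mul_atTop two_pos)
  have h2 := Real.tendsto_harmonic_sub_log.sub h1; simp only [sub_zero] at h2; exact h2

lemma vseq_tendsto : Filter.Tendsto vseq atTop (nhds Real.eulerMascheroniConstant) := by
  have h1 : Filter.Tendsto (fun n : ℕ => 1 / (2 * (n:ℝ) + 1)) atTop (nhds 0) := by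
    simp only [one_div]
    exact (tendsto_inv_atTop_zero).comp
      (Filter.tendsto_atTop_add_const_right _ 1
        ((tendsto_natCast_atTop_atTop).const_mul_atTop two_pos))
  have h2 := Real.tendsto_harmonic_sub_log.sub h1; simp only [sub_zero] at h2; exact h2

/-- For every positive integer `n`, the harmonic number `H n` satisfies
`1/(2n+1) ≤ H n − ln n − γ ≤ 1/(2n)`, where `γ` is the Euler–Mascheroni constant. -/
theorem harmonic_sub_log_sub_gamma_bounds (n : ℕ) (hn : 1 ≤ n) :
    1 / (2 * (n : ℝ) + 1) ≤ (harmonic n : ℝ) - Real.log n - Real.eulerMascheroniConstant ∧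
      (harmonic n : ℝ) - Real.log n - Real.eulerMascheroniConstant ≤ 1 / (2 * (n : ℝ)) := by
  have hu : useq n ≤ Real.eulerMascheroniConstant := by
    refine ge_of_tendsto useq_tendsto ?_
    refine Filter.eventually_atTop.2 ⟨n, fun m hm => ?_⟩
    induction m, hm using Nat.le_induction with
    | base => exact le_refl _
    | succ m hm ih => exact ih.trans (useq_step m (hn.trans hm))
  have hv : Real.eulerMascheroniConstant ≤ vseq n := by
    refine le_of_tendsto vseq_tendsto ?_
    refine Filter.eventually_atTop.2 ⟨n, fun m hm => ?_⟩
    induction m, hm using Nat.le_induction with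
    | base => exact le_refl _
    | succ m hm ih => exact (vseq_step m (hn.trans hm)).trans ih
  constructor
  · have := hv; simp only [vseq] at this; linarith
  · have := hu; simp only [useq] at this; linarith
end

section
/- For every positive integer k, ln((k+1)/k) − 1/(k+1) ≥ (1/2)(1/(k+1/2) − 1/(k+3/2)). -/
open Real

lemma taylor_lb {x : ℝ} (h0 : 0 < x) (h1 : x < 1) :
    x + x^2/2 + x^3/3 + x^4/4 - x^5/(1-x) ≤ -Real.log (1 - x) := by
  have hx : |x| < 1 := by rw [abs_of_pos h0]; exact h1
  have H := Real.abs_log_sub_add_sum_range_le hx 4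
  rw [abs_of_pos h0] at H
  rw [show (∑ i ∈ Finset.range 4, x ^ (i + 1) / ((i:ℝ) + 1)) =
      x + x^2/2 + x^3/3 + x^4/4 by norm_num [Finset.sum_range_succ]] at H
  have := abs_le.1 H
  linarith [this.1]

/-- For every positive integer `k`, `ln((k+1)/k) − 1/(k+1) ≥ (1/2)(1/(k+1/2) − 1/(k+3/2))`. -/
theorem log_succ_div_sub_inv_succ_ge (k : ℕ) (hk : 1 ≤ k) :
    Real.log (((k : ℝ) + 1) / k) - 1 / ((k : ℝ) + 1) ≥
      (1 / 2) * (1 / ((k : ℝ) + 1 / 2) - 1 / ((k : ℝ) + 3 / 2)) := by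
  rcases eq_or_lt_of_le hk with h1 | h2
  · -- k = 1
    have hk1 : (k : ℝ) = 1 := by exact_mod_cast h1.symm
    rw [hk1]
    norm_num
    linarith [Real.log_two_gt_d9]
  · -- k ≥ 2
    have hk2 : (2 : ℝ) ≤ (k : ℝ) := by exact_mod_cast h2
    set c : ℝ := (k : ℝ) with hc
    have hc0 : 0 < c := by linarith
    have hx0 : 0 < 1/(c+1) := by positivity
    have hx1 : 1/(c+1) < 1 := by rw [div_lt_one (by linarith)]; linarith
    have hlog : Real.log ((c+1)/c) = -Real.log (1 - 1/(c+1)) := by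
      have : (1 : ℝ) - 1/(c+1) = c/(c+1) := by field_simp; ring
      rw [this, ← Real.log_inv]
      congr 1
      field_simp
    have key := taylor_lb hx0 hx1
    rw [← hlog] at key
    set x : ℝ := 1/(c+1) with hxdef
    have h1x : 1 - x = c/(c+1) := by rw [hxdef]; field_simp; ring
    have hE : x + x^2/2 + x^3/3 + x^4/4 - x^5/(1-x) - 1/(c+1)
        = (6*c^3 + 16*c^2 + 13*c - 12)/(12*c*(c+1)^4) := by
      rw [hxdef, h1x]
      field_simp
      ring
    have hR : (1 / 2) * (1 / (c + 1 / 2) - 1 / (c + 3 / 2))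
        = 2/((2*c+1)*(2*c+3)) := by
      field_simp
      ring
    have hrat : (1 / 2) * (1 / (c + 1 / 2) - 1 / (c + 3 / 2)) ≤
        x + x^2/2 + x^3/3 + x^4/4 - x^5/(1-x) - 1/(c+1) := by
      rw [hE, hR, div_le_div_iff₀ (by positivity) (by positivity)]
      nlinarith [hk2, sq_nonneg c, sq_nonneg (c-2), mul_pos hc0 hc0]
    linarith
end

section
/- The function f(t) = ln(1 + 1/t) + ln(1 + 1/(t + 1/2)) − 1/(t+1) − 1/(t + 1/2) is nonnegative for all real t ≥ 1. -/
open Real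

lemma pade_log_lower (x : ℝ) (hx : 0 ≤ x) : 2 * x / (2 + x) ≤ Real.log (1 + x) := by
  have key : MonotoneOn (fun y : ℝ => Real.log (1 + y) - 2 * y / (2 + y)) (Set.Ici 0) := by
    apply monotoneOn_of_deriv_nonneg (convex_Ici 0)
    · apply ContinuousOn.sub
      · apply ContinuousOn.log (by fun_prop)
        intro y hy
        simp only [Set.mem_Ici] at hy
        intro h; linarith
      · apply ContinuousOn.div (by fun_prop) (by fun_prop)
        intro y hy
        simp only [Set.mem_Ici] at hy
        intro h; linarith
    · intro y hy
      simp only [interior_Ici, Set.mem_Ioi] at hy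
      have h1 : (1 : ℝ) + y ≠ 0 := by positivity
      exact ((((hasDerivAt_id y).const_add (1 : ℝ)).log h1).sub
        (((hasDerivAt_id y).const_mul (2 : ℝ)).div
          ((hasDerivAt_id y).const_add (2 : ℝ)) (by positivity))).differentiableAt.differentiableWithinAt
    · intro y hy
      simp only [interior_Ici, Set.mem_Ioi] at hy
      have h1 : (1 : ℝ) + y ≠ 0 := by positivity
      have h2 : (2 : ℝ) + y ≠ 0 := by positivity
      have d1 : HasDerivAt (fun y : ℝ => Real.log (1 + y)) (1 / (1 + y)) y := by
        have := ((hasDerivAt_id y).const_add (1 : ℝ)).log h1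
        simpa using this
      have d2 : HasDerivAt (fun y : ℝ => 2 * y / (2 + y)) (4 / (2 + y) ^ 2) y := by
        have := ((hasDerivAt_id y).const_mul (2 : ℝ)).div
          ((hasDerivAt_id y).const_add (2 : ℝ)) h2
        refine this.congr_deriv ?_
        simp only [id]
        ring
      have hd := (d1.sub d2).deriv
      rw [show (fun y : ℝ => Real.log (1 + y) - 2 * y / (2 + y)) = (fun y : ℝ => Real.log (1 + y)) - (fun y : ℝ => 2 * y / (2 + y)) from rfl, hd]
      rw [sub_nonneg, div_le_div_iff₀ (by positivity) (by positivity)]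
      nlinarith [sq_nonneg y]
  have h := key (Set.self_mem_Ici) (Set.mem_Ici.mpr hx) hx
  simp only [mul_zero, zero_div, Real.log_one, add_zero, sub_zero, zero_sub] at h
  linarith [h]

/-- The function `f(t) = ln(1 + 1/t) + ln(1 + 1/(t+1/2)) − 1/(t+1) − 1/(t+1/2)` is
nonnegative for all real `t ≥ 1`. -/
theorem aux_function_nonneg (t : ℝ) (ht : 1 ≤ t) :
    0 ≤ Real.log (1 + 1 / t) + Real.log (1 + 1 / (t + 1 / 2))
        - 1 / (t + 1) - 1 / (t + 1 / 2) := by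
  have ht0 : (0 : ℝ) < t := by linarith
  have ht2 : (0 : ℝ) < t + 1 / 2 := by linarith
  have h1 := pade_log_lower (1 / t) (by positivity)
  have h2 := pade_log_lower (1 / (t + 1 / 2)) (by positivity)
  have e1 : 2 * (1 / t) / (2 + 1 / t) = 1 / (t + 1 / 2) := by
    field_simp
  have e2 : 2 * (1 / (t + 1 / 2)) / (2 + 1 / (t + 1 / 2)) = 1 / (t + 1) := by
    field_simp
    ring
  rw [e1] at h1
  rw [e2] at h2
  linarith
end

section
/- Let n ≥ 8 and 3 ≤ ℓ+1 < n/2. Then (2/(3(2n−1))) + n(H_n − H_{n−ℓ−1}) ≤ 2(ℓ+1)·ln(2), where H_j is the j-th harmonic number. -/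
/-- Harmonic difference is bounded by a log difference. -/
lemma harmonic_sub_le_log {m : ℕ} (hm : 1 ≤ m) :
    ∀ n : ℕ, m ≤ n →
      (harmonic n : ℝ) - (harmonic m : ℝ) ≤ Real.log n - Real.log m := by
  intro n
  induction n with
  | zero => intro h; omega
  | succ n ih =>
    intro hmn
    rcases Nat.lt_or_ge m (n + 1) with h | h
    · have hmn' : m ≤ n := by omega
      have hn0 : (0 : ℝ) < n := by
        have : 1 ≤ n := le_trans hm hmn'
        exact_mod_cast Nat.lt_of_lt_of_le Nat.zero_lt_one this
      have ih' := ih hmn'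
      have hstep : ((n : ℝ) + 1)⁻¹ ≤ Real.log ((n : ℝ) + 1) - Real.log n := by
        have h0 : (0 : ℝ) < (n : ℝ) / (n + 1) := by positivity
        have hl := Real.log_le_sub_one_of_pos h0
        rw [Real.log_div (ne_of_gt hn0) (by positivity)] at hl
        have he : (n : ℝ) / (n + 1) - 1 = -((n : ℝ) + 1)⁻¹ := by
          field_simp
          ring
        rw [he] at hl
        linarith
      rw [harmonic_succ]
      push_cast
      push_cast at ih' hstep
      linarith
    · have hEq : m = n + 1 := by omega
      subst hEq
      simp

/-- Concavity bound for `log (1 - x)`. -/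
lemma log_one_sub_ge {x x0 : ℝ} (hx : 0 ≤ x) (hxx0 : x ≤ x0) (hx0 : 0 < x0)
    (hx01 : x0 < 1) :
    (x / x0) * Real.log (1 - x0) ≤ Real.log (1 - x) := by
  have hcc := strictConcaveOn_log_Ioi.concaveOn
  have h1 : (1 : ℝ) ∈ Set.Ioi (0 : ℝ) := by norm_num
  have h2 : (1 - x0) ∈ Set.Ioi (0 : ℝ) := by
    simp only [Set.mem_Ioi]; linarith
  have ha : 0 ≤ 1 - x / x0 := by
    rw [sub_nonneg]
    exact (div_le_one hx0).2 hxx0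
  have hb : 0 ≤ x / x0 := by positivity
  have hab : (1 - x / x0) + x / x0 = 1 := by ring
  have hmain := hcc.2 h1 h2 ha hb hab
  simp only [smul_eq_mul, mul_one, Real.log_one, mul_zero, zero_add] at hmain
  have he : 1 - x / x0 + (x / x0) * (1 - x0) = 1 - x := by
    field_simp
    ring
  rw [he] at hmain
  linarith

set_option maxHeartbeats 1000000 in
/-- For `n ≥ 8` and `3 ≤ ℓ+1 < n/2`, the expected runtime of the first phase
satisfies `2/(3(2n−1)) + n(H_n − H_{n−ℓ−1}) ≤ 2(ℓ+1)ln 2`. -/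
theorem phase_one_runtime_bound (n ℓ : ℕ) (hn : 8 ≤ n) (hℓ : 3 ≤ ℓ + 1)
    (hℓn : ((ℓ : ℝ) + 1) < (n : ℝ) / 2) :
    2 / (3 * (2 * (n : ℝ) - 1)) +
        (n : ℝ) * ((harmonic n : ℝ) - (harmonic (n - ℓ - 1) : ℝ)) ≤
      2 * ((ℓ : ℝ) + 1) * Real.log 2 := by
  have hN : (8 : ℝ) ≤ (n : ℝ) := by exact_mod_cast hn
  set N : ℝ := (n : ℝ) with hNdef
  set K : ℝ := (ℓ : ℝ) + 1 with hKdef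
  have hK3 : (3 : ℝ) ≤ K := by
    rw [hKdef]; exact_mod_cast hℓ
  -- natural number bound: 2ℓ + 3 ≤ n
  have hnat : 2 * ℓ + 3 ≤ n := by
    by_contra hcon
    push_neg at hcon
    have : (n : ℝ) ≤ 2 * (ℓ : ℝ) + 2 := by exact_mod_cast Nat.lt_succ_iff.mp hcon
    rw [hKdef] at hℓn
    linarith
  have h2K : 2 * K ≤ N - 1 := by
    have : ((2 * ℓ + 3 : ℕ) : ℝ) ≤ (n : ℝ) := Nat.cast_le.mpr hnat
    push_cast at this
    rw [hKdef]; linarith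
  set m : ℕ := n - ℓ - 1 with hmdef
  have hm1 : 1 ≤ m := by omega
  have hmn : m ≤ n := by omega
  have hmR : (m : ℝ) = N - K := by
    rw [hmdef, hKdef, hNdef]
    have h1 : n - ℓ - 1 = n - (ℓ + 1) := by omega
    rw [h1, Nat.cast_sub (by omega : ℓ + 1 ≤ n)]
    push_cast
    ring
  have hNK : 0 < N - K := by linarith
  have hN1 : (0 : ℝ) < N - 1 := by linarith
  -- Step 1: harmonic difference bounded by log difference
  have hstep1 : (harmonic n : ℝ) - (harmonic m : ℝ) ≤ Real.log N - Real.log (N - K) := by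
    have := harmonic_sub_le_log hm1 n hmn
    rwa [hmR] at this
  -- Step 2: concavity bound on log N - log (N - K)
  set L : ℝ := Real.log ((N + 1) / N) with hLdef
  have hstep2 : Real.log N - Real.log (N - K) ≤ (2 * K / (N - 1)) * (Real.log 2 - L) := by
    have hB := log_one_sub_ge (x := K / N) (x0 := (N - 1) / (2 * N))
      (by positivity)
      (by rw [div_le_div_iff₀ (by linarith) (by linarith)]; nlinarith)
      (by positivity)
      ((div_lt_one (by linarith)).2 (by linarith))
    have e1 : 1 - K / N = (N - K) / N := by field_simp
    have e2 : 1 - (N - 1) / (2 * N) = (N + 1) / (2 * N) := by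
      field_simp; ring
    have e3 : (K / N) / ((N - 1) / (2 * N)) = 2 * K / (N - 1) := by
      field_simp
    rw [e1, e2, e3] at hB
    have e4 : Real.log ((N + 1) / (2 * N)) = L - Real.log 2 := by
      rw [hLdef, show (N + 1) / (2 * N) = ((N + 1) / N) / 2 by ring,
        Real.log_div (by positivity) (by norm_num)]
    have e5 : Real.log ((N - K) / N) = Real.log (N - K) - Real.log N :=
      Real.log_div (ne_of_gt hNK) (by positivity)
    rw [e4, e5] at hB
    nlinarith [hB]
  -- Step 3: lower bound on L
  have hL : 1 / (N + 1) ≤ L := by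
    have h0 : (0 : ℝ) < N / (N + 1) := by positivity
    have hl := Real.log_le_sub_one_of_pos h0
    have hinv : Real.log (N / (N + 1)) = -L := by
      rw [hLdef, show N / (N + 1) = ((N + 1) / N)⁻¹ by rw [inv_div], Real.log_inv]
    rw [hinv] at hl
    have he : N / (N + 1) - 1 = -(1 / (N + 1)) := by field_simp; ring
    rw [he] at hl
    linarith
  -- combine
  have hmul : N * ((harmonic n : ℝ) - (harmonic m : ℝ)) ≤
      N * ((2 * K / (N - 1)) * (Real.log 2 - L)) :=
    mul_le_mul_of_nonneg_left (le_trans hstep1 hstep2) (by linarith)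
  have hA := Real.log_two_lt_d9
  have hNL : 8 / 9 ≤ N * L := by
    have h1 : N * (1 / (N + 1)) ≤ N * L :=
      mul_le_mul_of_nonneg_left hL (by linarith)
    rw [mul_one_div] at h1
    have h2 : (8 : ℝ) / 9 ≤ N / (N + 1) := by
      rw [div_le_div_iff₀ (by norm_num) (by linarith)]; linarith
    linarith
  have hc : 1 / 6 ≤ N * L - Real.log 2 := by linarith
  have hrw : N * ((2 * K / (N - 1)) * (Real.log 2 - L)) =
      2 * K * Real.log 2 - (2 * K / (N - 1)) * (N * L - Real.log 2) := by
    field_simp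
    ring
  have h' : 2 / (3 * (2 * N - 1)) ≤ 1 / (N - 1) := by
    rw [div_le_div_iff₀ (by linarith) hN1]; linarith
  have h'' : 1 / (N - 1) ≤ (2 * K / (N - 1)) * (N * L - Real.log 2) := by
    rw [div_mul_eq_mul_div]
    gcongr
    nlinarith
  have hgoal : 2 / (3 * (2 * N - 1)) + N * ((harmonic n : ℝ) - (harmonic m : ℝ)) ≤
      2 * K * Real.log 2 := by
    rw [hrw] at hmul
    linarith
  exact hgoal
end

section
/- Let 0 < α, γ < 1, r > 0, and let q_0 ≤ M/(1−γ) where M = n−ℓ−1 > 0, and suppose r > ((1/(α(1−γ))) − 1)·M. If q_1 = (1 − α(1−γ)) q_0 − α r and q_2 = (1 − α(1−γ)) q_1 − α r, then q_1 < 0 and q_2 < −α r. -/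
/-- Two consecutive plateau-penalty updates under hypothesis (H): with
`M = n−ℓ−1 > 0`, `q₀ ≤ M/(1−γ)` and `r > (1/(α(1−γ)) − 1)·M`, if
`q₁ = (1 − α(1−γ))q₀ − αr` and `q₂ = (1 − α(1−γ))q₁ − αr`, then `q₁ < 0` and
`q₂ < −αr`. -/
theorem double_plateau_penalty (n ℓ : ℕ) (α γ r q₀ q₁ q₂ : ℝ)
    (hα : 0 < α) (hα1 : α < 1) (hγ : 0 < γ) (hγ1 : γ < 1) (hrpos : 0 < r)
    (hM : 0 < (n : ℝ) - ℓ - 1)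
    (hq₀ : q₀ ≤ ((n : ℝ) - ℓ - 1) / (1 - γ))
    (hr : r > (1 / (α * (1 - γ)) - 1) * ((n : ℝ) - ℓ - 1))
    (hq₁ : q₁ = (1 - α * (1 - γ)) * q₀ - α * r)
    (hq₂ : q₂ = (1 - α * (1 - γ)) * q₁ - α * r) :
    q₁ < 0 ∧ q₂ < -(α * r) := by
  set M : ℝ := (n : ℝ) - ℓ - 1 with hMdef
  have hγ' : 0 < 1 - γ := by linarith
  have hA : 0 < α * (1 - γ) := by positivity
  have hA1 : α * (1 - γ) < 1 := by nlinarith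
  have hβ : 0 < 1 - α * (1 - γ) := by linarith
  -- from hr: α(1-γ) r > (1 - α(1-γ)) M
  have h1 : α * (1 - γ) * r > (1 - α * (1 - γ)) * M := by
    have := mul_lt_mul_of_pos_left hr hA
    have hne : α * (1 - γ) ≠ 0 := ne_of_gt hA
    field_simp at this
    nlinarith
  -- β q₀ ≤ β M/(1-γ)
  have h2 : (1 - α * (1 - γ)) * q₀ ≤ (1 - α * (1 - γ)) * (M / (1 - γ)) :=
    mul_le_mul_of_nonneg_left hq₀ (le_of_lt hβ)
  have h3 : α * r > (1 - α * (1 - γ)) * (M / (1 - γ)) := by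
    rw [mul_div_assoc'] at *
    rw [gt_iff_lt, div_lt_iff₀ hγ']
    nlinarith
  have hq1 : q₁ < 0 := by rw [hq₁]; linarith
  refine ⟨hq1, ?_⟩
  rw [hq₂]
  nlinarith
end
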